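/- There exists a constant C > 0 such that with high probability the independence number of G(n, (3γ·ln n)/(4n)) is at least C·n·ln(ln n)/ln n. -/

import Mathlib

/-!
Run the greedy algorithm that scans the vertices in order and keeps a vertex when it has no
neighbour among the vertices kept so far. When vertex `i` is scanned its edges to earlier vertices
have not been looked at yet, so given the past it is kept with probability `(1 - p) ^ |S|`, where
`S` is the current greedy set. Hence the potential `exp (-|S|)`, killed once `|S|` reaches `k`,
shrinks in expectation by a factor `1 - (1 - e⁻¹) (1 - p) ^ k` at every step, and Markov's
inequality gives `P(α < k) ≤ exp (k - (1 - e⁻¹) n (1 - p) ^ k)`. For `p = 3γ ln n / (4n)` and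
`k = n ln ln n / (3γ ln n)` we have `p k ≤ ln ln n / 4 + 1 / 2`, so `(1 - p) ^ k ≥ e⁻¹ / √(ln n)`
and the exponent tends to `-∞` like `-n / √(ln n)`.
-/

open MeasureTheory Filter

/-- Index type for potential edges of a graph on `Fin n`: ordered pairs `(i,j)` with `i < j`. -/
abbrev EdgeIdx (n : ℕ) := {e : Fin n × Fin n // e.1 < e.2}

/-- Bernoulli measure on `Bool` with success probability `p` (clamped to `[0,1]`). -/
noncomputable def bern (p : ℝ) : Measure Bool :=
  (PMF.bernoulli (min (Real.toNNReal p) 1) (min_le_right _ _)).toMeasure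

instance (p : ℝ) : IsProbabilityMeasure (bern p) := by
  unfold bern; infer_instance

/-- The Erdős–Rényi random graph `G(n,p)`: each potential edge present
independently with probability `p`. -/
noncomputable def gnp (n : ℕ) (p : ℝ) : Measure (EdgeIdx n → Bool) :=
  Measure.pi fun _ => bern p

/-- Adjacency of `i` and `j` in the sampled graph `ω`. -/
def adjB {n : ℕ} (ω : EdgeIdx n → Bool) (i j : Fin n) : Bool :=
  if h : i < j then ω ⟨(i, j), h⟩ else if h' : j < i then ω ⟨(j, i), h'⟩ else false

/-- The number of triangles (3-sets of pairwise adjacent vertices) in the sampled graph. -/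
def triangleCount (n : ℕ) (ω : EdgeIdx n → Bool) : ℕ :=
  (Finset.univ.filter fun t : Fin n × Fin n × Fin n =>
    t.1 < t.2.1 ∧ t.2.1 < t.2.2 ∧ adjB ω t.1 t.2.1 = true ∧ adjB ω t.1 t.2.2 = true ∧
      adjB ω t.2.1 t.2.2 = true).card


/-- The independence number of the sampled graph: the largest size of a set of
pairwise non-adjacent vertices. -/
noncomputable def sampleIndepNum (n : ℕ) (ω : EdgeIdx n → Bool) : ℕ :=
  sSup {k | ∃ s : Finset (Fin n), s.card = k ∧ ∀ i ∈ s, ∀ j ∈ s, adjB ω i j = false}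

open Finset Real Topology

section BernoulliWeight

variable {ι : Type*} [Fintype ι]

noncomputable def bernoulliWeight (p : ℝ) (ω : ι → Bool) : ℝ :=
  ∏ e, if ω e then p else 1 - p

lemma bernoulliWeight_nonneg {p : ℝ} (h0 : 0 ≤ p) (h1 : p ≤ 1) (ω : ι → Bool) :
    0 ≤ bernoulliWeight p ω :=
  prod_nonneg fun e _ => by split_ifs <;> linarith

variable [DecidableEq ι]

lemma sum_bernoulliWeight_filter_forall_false (p : ℝ) (s : Finset ι) :
    ∑ ω with ∀ e ∈ s, ω e = false, bernoulliWeight p ω = (1 - p) ^ #s := by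
  have hfactor : ∀ ω : ι → Bool, (if ∀ e ∈ s, ω e = false then bernoulliWeight p ω else 0) =
      ∏ e, if e ∈ s ∧ ω e = true then 0 else if ω e then p else 1 - p := by
    intro ω
    split_ifs with hω
    · refine prod_congr rfl fun e _ => ?_
      by_cases he : e ∈ s <;> simp [he, hω]
    · push Not at hω
      obtain ⟨e, he, hωe⟩ := hω
      exact (prod_eq_zero (mem_univ e) (by simp_all)).symm
  rw [sum_filter, Fintype.sum_congr _ _ hfactor, ← Fintype.prod_sum (κ := fun _ => Bool)
    fun e b => if e ∈ s ∧ b = true then 0 else if b then p else 1 - p, ← prod_const,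
    ← Fintype.prod_ite_mem s]
  exact prod_congr rfl fun e _ => by by_cases he : e ∈ s <;> simp [he]

lemma sum_bernoulliWeight (p : ℝ) : ∑ ω : ι → Bool, bernoulliWeight p ω = 1 := by
  simpa using sum_bernoulliWeight_filter_forall_false (ι := ι) p ∅

/-- `E[Φ G] = E[Φ · E[G | ω outside s]]`, by swapping the coordinates in `s` between `ω` and `σ`. -/
lemma sum_bernoulliWeight_mul_resample (p : ℝ) (s : Finset ι)
    {Φ G : (ι → Bool) → ℝ} (hΦ : ∀ ω σ, Φ (s.piecewise σ ω) = Φ ω) :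
    ∑ ω, bernoulliWeight p ω * (Φ ω * G ω) =
      ∑ ω, bernoulliWeight p ω * (Φ ω * ∑ σ, bernoulliWeight p σ * G (s.piecewise σ ω)) := by
  set swap : (ι → Bool) × (ι → Bool) → (ι → Bool) × (ι → Bool) :=
    fun x => (s.piecewise x.2 x.1, s.piecewise x.1 x.2)
  have hswap : Function.Involutive swap := by
    rintro ⟨ω, σ⟩
    ext e <;> by_cases he : e ∈ s <;> simp [swap, he]
  have hW : ∀ ω σ, bernoulliWeight p (s.piecewise σ ω) * bernoulliWeight p (s.piecewise ω σ) =
      bernoulliWeight p ω * bernoulliWeight p σ := by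
    intro ω σ
    simp only [bernoulliWeight, ← prod_mul_distrib]
    refine prod_congr rfl fun e _ => ?_
    by_cases he : e ∈ s <;> simp [he, mul_comm]
  set F : (ι → Bool) × (ι → Bool) → ℝ :=
    fun x => bernoulliWeight p x.1 * bernoulliWeight p x.2 * (Φ x.1 * G x.1)
  calc ∑ ω, bernoulliWeight p ω * (Φ ω * G ω)
        = ∑ ω, bernoulliWeight p ω * (Φ ω * G ω) * ∑ σ : ι → Bool, bernoulliWeight p σ := by
        simp only [sum_bernoulliWeight, mul_one]
    _ = ∑ x, F x := by
        simp only [F, Fintype.sum_prod_type, mul_sum]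
        exact sum_congr rfl fun ω _ => sum_congr rfl fun σ _ => by ring
    _ = ∑ x, F (swap x) := (Equiv.sum_comp (hswap.toPerm _) F).symm
    _ = _ := by
        simp only [F, swap, hW, hΦ, Fintype.sum_prod_type, mul_sum]
        exact sum_congr rfl fun ω _ => sum_congr rfl fun σ _ => by ring

end BernoulliWeight

lemma bern_real_singleton {p : ℝ} (h0 : 0 ≤ p) (h1 : p ≤ 1) (b : Bool) :
    (bern p).real {b} = if b then p else 1 - p := by
  cases b <;> simp [bern, measureReal_def, PMF.bernoulli_apply, h0, Real.toNNReal_le_one.2 h1]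

lemma measureReal_pi_bern {ι : Type*} [Fintype ι] [DecidableEq ι] {p : ℝ} (h0 : 0 ≤ p)
    (h1 : p ≤ 1) (S : Set (ι → Bool)) [DecidablePred (· ∈ S)] :
    (Measure.pi fun _ : ι => bern p).real S = ∑ ω with ω ∈ S, bernoulliWeight p ω := by
  have hS : S = ↑(univ.filter (· ∈ S)) := by ext; simp
  conv_lhs => rw [hS, ← sum_measureReal_singleton]
  refine sum_congr rfl fun ω _ => ?_
  simp [measureReal_def, ENNReal.toReal_prod, ← bern_real_singleton h0 h1, bernoulliWeight]

instance gnp.instIsProbabilityMeasure (n : ℕ) (p : ℝ) : IsProbabilityMeasure (gnp n p) := by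
  unfold gnp; infer_instance

section Greedy

variable {n : ℕ}

open Classical in
noncomputable def greedyIndepSet (G : SimpleGraph (Fin n)) : ℕ → Finset (Fin n)
  | 0 => ∅
  | i + 1 =>
    if h : ∃ hi : i < n, ∀ u ∈ greedyIndepSet G i, ¬ G.Adj ⟨i, hi⟩ u then
      insert ⟨i, h.1⟩ (greedyIndepSet G i)
    else greedyIndepSet G i

def GreedyAccepts (G : SimpleGraph (Fin n)) (i : ℕ) : Prop :=
  ∃ hi : i < n, ∀ u ∈ greedyIndepSet G i, ¬ G.Adj ⟨i, hi⟩ u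

variable {G G' : SimpleGraph (Fin n)} {i : ℕ}

open Classical in
lemma greedyIndepSet_succ :
    greedyIndepSet G (i + 1) =
      if h : GreedyAccepts G i then insert ⟨i, h.1⟩ (greedyIndepSet G i)
      else greedyIndepSet G i := by
  rw [greedyIndepSet.eq_2]
  exact dite_congr rfl (fun _ => rfl) fun _ => rfl

lemma val_lt_of_mem_greedyIndepSet {u : Fin n} (hu : u ∈ greedyIndepSet G i) : (u : ℕ) < i := by
  induction i with
  | zero => simp [greedyIndepSet] at hu
  | succ i ih =>
    rw [greedyIndepSet_succ] at hu
    split_ifs at hu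
    · rcases mem_insert.1 hu with rfl | hu
      · exact Nat.lt_succ_self i
      · exact (ih hu).trans (Nat.lt_succ_self i)
    · exact (ih hu).trans (Nat.lt_succ_self i)

open Classical in
lemma card_greedyIndepSet_succ :
    #(greedyIndepSet G (i + 1)) = #(greedyIndepSet G i) + if GreedyAccepts G i then 1 else 0 := by
  rw [greedyIndepSet_succ]
  split_ifs with h
  · exact card_insert_of_notMem fun hi => (val_lt_of_mem_greedyIndepSet hi).false
  · rfl

lemma isIndepSet_greedyIndepSet : G.IsIndepSet (greedyIndepSet G i : Set (Fin n)) := by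
  induction i with
  | zero => simp [greedyIndepSet]
  | succ i ih =>
    rw [greedyIndepSet_succ]
    split_ifs with h
    · rw [coe_insert, SimpleGraph.isIndepSet_iff, Set.pairwise_insert]
      exact ⟨ih, fun u hu _ => ⟨h.2 u hu, mt G.adj_symm (h.2 u hu)⟩⟩
    · exact ih

lemma greedyIndepSet_congr
    (hG : ∀ u v : Fin n, (u : ℕ) < i → (v : ℕ) < i → (G.Adj u v ↔ G'.Adj u v)) :
    greedyIndepSet G i = greedyIndepSet G' i := by
  induction i with
  | zero => rfl
  | succ i ih =>
    have ih := ih fun u v hu hv => hG u v (hu.trans i.lt_succ_self) (hv.trans i.lt_succ_self)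
    have hacc : GreedyAccepts G i ↔ GreedyAccepts G' i := by
      unfold GreedyAccepts
      rw [ih]
      exact exists_congr fun _ => forall₂_congr fun _ hu => not_congr <|
        hG _ _ i.lt_succ_self ((val_lt_of_mem_greedyIndepSet hu).trans i.lt_succ_self)
    classical
    rw [greedyIndepSet_succ, greedyIndepSet_succ, ih]
    exact dite_congr (propext hacc) (fun _ => rfl) fun _ => rfl

end Greedy

section SampleGraph

variable {n : ℕ}

lemma adjB_comm (ω : EdgeIdx n → Bool) (u v : Fin n) : adjB ω u v = adjB ω v u := by
  unfold adjB
  rcases lt_trichotomy u v with h | rfl | h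
  · rw [dif_pos h, dif_neg (not_lt.2 h.le), dif_pos h]
  · rfl
  · rw [dif_neg (not_lt.2 h.le), dif_pos h, dif_pos h]

lemma adjB_of_lt (ω : EdgeIdx n → Bool) {u v : Fin n} (h : u < v) :
    adjB ω v u = ω ⟨(u, v), h⟩ := by
  rw [adjB, dif_neg (not_lt.2 h.le), dif_pos h]

def sampleGraph (ω : EdgeIdx n → Bool) : SimpleGraph (Fin n) :=
  SimpleGraph.mk' ⟨adjB ω, adjB_comm ω, fun u => by simp [adjB]⟩

lemma sampleGraph_adj {ω : EdgeIdx n → Bool} {u v : Fin n} :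
    (sampleGraph ω).Adj u v ↔ adjB ω u v :=
  Iff.rfl

lemma card_le_sampleIndepNum (ω : EdgeIdx n → Bool) {s : Finset (Fin n)}
    (hs : (sampleGraph ω).IsIndepSet s) : #s ≤ sampleIndepNum n ω := by
  refine le_csSup ⟨n, fun k ⟨t, ht, _⟩ => ht ▸ card_le_univ t |>.trans_eq (Fintype.card_fin n)⟩
    ⟨s, rfl, fun u hu v hv => ?_⟩
  rcases eq_or_ne u v with rfl | huv
  · simp [adjB]
  · simpa [sampleGraph] using hs hu hv huv

lemma greedyIndepSet_sampleGraph_congr {ω ω' : EdgeIdx n → Bool} {i : ℕ}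
    (h : ∀ e : EdgeIdx n, (e.1.2 : ℕ) < i → ω e = ω' e) :
    greedyIndepSet (sampleGraph ω) i = greedyIndepSet (sampleGraph ω') i := by
  refine greedyIndepSet_congr fun u v hu hv => ?_
  rw [sampleGraph_adj, sampleGraph_adj]
  unfold adjB
  split_ifs
  · rw [h _ hv]
  · rw [h _ hu]
  · rfl

/-- The randomness read by the greedy algorithm at step `i`. -/
def edgesToLower (i : ℕ) : Finset (EdgeIdx n) :=
  univ.filter fun e => (e.1.2 : ℕ) = i

lemma greedyIndepSet_piecewise_edgesToLower (i : ℕ) (ω σ : EdgeIdx n → Bool) :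
    greedyIndepSet (sampleGraph ((edgesToLower i).piecewise σ ω)) i =
      greedyIndepSet (sampleGraph ω) i :=
  greedyIndepSet_sampleGraph_congr fun _ he =>
    piecewise_eq_of_notMem _ _ _ fun hmem => he.ne (mem_filter.1 hmem).2

lemma card_filter_edgesToLower {i : ℕ} (hi : i < n) {S : Finset (Fin n)}
    (hS : ∀ u ∈ S, (u : ℕ) < i) : #((edgesToLower i).filter fun e => e.1.1 ∈ S) = #S := by
  refine card_bij (fun e _ => e.1.1) (fun e he => (mem_filter.1 he).2) ?_ ?_
  · rintro ⟨⟨u, v⟩, _⟩ he ⟨⟨u', v'⟩, _⟩ he' rfl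
    obtain rfl : v = v' := Fin.ext <|
      (mem_filter.1 (mem_filter.1 he).1).2.trans (mem_filter.1 (mem_filter.1 he').1).2.symm
    rfl
  · exact fun u hu => ⟨⟨(u, ⟨i, hi⟩), hS u hu⟩, by simp [edgesToLower, hu], rfl⟩

lemma greedyAccepts_piecewise_edgesToLower_iff {i : ℕ} (hi : i < n) (ω σ : EdgeIdx n → Bool) :
    GreedyAccepts (sampleGraph ((edgesToLower i).piecewise σ ω)) i ↔
      ∀ e ∈ (edgesToLower i).filter fun e => e.1.1 ∈ greedyIndepSet (sampleGraph ω) i,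
        σ e = false := by
  have hadj : ∀ u (hu : u < (⟨i, hi⟩ : Fin n)),
      (sampleGraph ((edgesToLower i).piecewise σ ω)).Adj ⟨i, hi⟩ u ↔ σ ⟨(u, _), hu⟩ = true := by
    intro u hu
    rw [sampleGraph_adj, adjB_of_lt, piecewise_eq_of_mem _ _ _ (by simp [edgesToLower])]
  simp only [GreedyAccepts, greedyIndepSet_piecewise_edgesToLower, exists_prop_of_true hi]
  constructor
  · rintro h ⟨⟨u, v⟩, huv⟩ he
    obtain ⟨hv, hu⟩ := mem_filter.1 he
    obtain rfl : v = ⟨i, hi⟩ := Fin.ext (mem_filter.1 hv).2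
    simpa [hadj u huv] using h u hu
  · intro h u hu
    have hui : u < (⟨i, hi⟩ : Fin n) := val_lt_of_mem_greedyIndepSet hu
    rw [hadj u hui, h _ (mem_filter.2 ⟨by simp [edgesToLower], hu⟩)]
    exact Bool.false_ne_true

open Classical in
lemma sum_bernoulliWeight_greedyAccepts (p : ℝ) {i : ℕ} (hi : i < n) (ω : EdgeIdx n → Bool) :
    ∑ σ with GreedyAccepts (sampleGraph ((edgesToLower i).piecewise σ ω)) i,
      bernoulliWeight p σ = (1 - p) ^ #(greedyIndepSet (sampleGraph ω) i) := by
  rw [filter_congr fun σ _ => greedyAccepts_piecewise_edgesToLower_iff hi ω σ,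
    sum_bernoulliWeight_filter_forall_false,
    card_filter_edgesToLower hi fun _ => val_lt_of_mem_greedyIndepSet]

end SampleGraph

section Potential

variable {n : ℕ} {p : ℝ}

noncomputable def greedyPotential (k i : ℕ) (ω : EdgeIdx n → Bool) : ℝ :=
  if #(greedyIndepSet (sampleGraph ω) i) < k then exp (-#(greedyIndepSet (sampleGraph ω) i)) else 0

lemma greedyPotential_nonneg (k i : ℕ) (ω : EdgeIdx n → Bool) : 0 ≤ greedyPotential k i ω := by
  unfold greedyPotential
  split_ifs <;> positivity

lemma greedyPotential_le_one (k i : ℕ) (ω : EdgeIdx n → Bool) : greedyPotential k i ω ≤ 1 := by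
  unfold greedyPotential
  split_ifs
  · exact exp_le_one_iff.2 (by simp)
  · exact zero_le_one

open Classical in
lemma greedyPotential_succ_le (k i : ℕ) (ω : EdgeIdx n → Bool) :
    greedyPotential k (i + 1) ω ≤
      greedyPotential k i ω * if GreedyAccepts (sampleGraph ω) i then exp (-1) else 1 := by
  unfold greedyPotential
  rw [card_greedyIndepSet_succ]
  by_cases hacc : GreedyAccepts (sampleGraph ω) i
  · simp only [hacc, if_true]
    split_ifs with h h'
    · rw [← exp_add]
      push_cast
      exact le_of_eq (by ring_nf)
    · omega
    · positivity
    · rw [zero_mul]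
  · simp only [hacc, if_false, add_zero, mul_one, le_refl]

lemma greedyPotential_piecewise_edgesToLower (k i : ℕ) (ω σ : EdgeIdx n → Bool) :
    greedyPotential k i ((edgesToLower i).piecewise σ ω) = greedyPotential k i ω := by
  simp only [greedyPotential, greedyIndepSet_piecewise_edgesToLower]

lemma one_sub_mul_one_sub_pow_nonneg (h0 : 0 ≤ p) (h1 : p ≤ 1) (k : ℕ) :
    0 ≤ 1 - (1 - exp (-1)) * (1 - p) ^ k := by
  have hpow : (1 - p) ^ k ≤ 1 := pow_le_one₀ (by linarith) (by linarith)
  nlinarith [exp_pos (-1), exp_le_one_iff.2 (by norm_num : (-1 : ℝ) ≤ 0)]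

lemma sum_bernoulliWeight_mul_greedyPotential_succ_le (h0 : 0 ≤ p) (h1 : p ≤ 1) (k : ℕ) {i : ℕ}
    (hi : i < n) :
    ∑ ω : EdgeIdx n → Bool, bernoulliWeight p ω * greedyPotential k (i + 1) ω ≤
      (1 - (1 - exp (-1)) * (1 - p) ^ k) *
        ∑ ω : EdgeIdx n → Bool, bernoulliWeight p ω * greedyPotential k i ω := by
  classical
  set acceptFactor : (EdgeIdx n → Bool) → ℝ :=
    fun ω => if GreedyAccepts (sampleGraph ω) i then exp (-1) else 1
  have hresampled : ∀ ω, ∑ σ, bernoulliWeight p σ * acceptFactor ((edgesToLower i).piecewise σ ω)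
      = 1 - (1 - exp (-1)) * (1 - p) ^ #(greedyIndepSet (sampleGraph ω) i) := by
    intro ω
    calc ∑ σ, bernoulliWeight p σ * acceptFactor ((edgesToLower i).piecewise σ ω)
        = ∑ σ, bernoulliWeight p σ - (1 - exp (-1)) * ∑ σ with
            GreedyAccepts (sampleGraph ((edgesToLower i).piecewise σ ω)) i,
              bernoulliWeight p σ := by
          rw [sum_filter, mul_sum, ← sum_sub_distrib]
          refine sum_congr rfl fun σ _ => ?_
          simp only [acceptFactor]
          split_ifs <;> ring
      _ = _ := by rw [sum_bernoulliWeight, sum_bernoulliWeight_greedyAccepts p hi ω]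
  have hstopped : ∀ ω : EdgeIdx n → Bool, greedyPotential k i ω *
        ∑ σ, bernoulliWeight p σ * acceptFactor ((edgesToLower i).piecewise σ ω)
      ≤ greedyPotential k i ω * (1 - (1 - exp (-1)) * (1 - p) ^ k) := by
    intro ω
    rw [hresampled]
    have := greedyPotential_nonneg k i ω
    by_cases hk : #(greedyIndepSet (sampleGraph ω) i) < k
    · have hpow : (1 - p) ^ k ≤ (1 - p) ^ #(greedyIndepSet (sampleGraph ω) i) :=
        pow_le_pow_of_le_one (by linarith) (by linarith) hk.le
      have : 0 ≤ 1 - exp (-1) := by linarith [exp_le_one_iff.2 (by norm_num : (-1 : ℝ) ≤ 0)]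
      gcongr
    · simp [greedyPotential, hk]
  calc ∑ ω, bernoulliWeight p ω * greedyPotential k (i + 1) ω
      ≤ ∑ ω, bernoulliWeight p ω * (greedyPotential k i ω * acceptFactor ω) :=
        sum_le_sum fun ω _ => mul_le_mul_of_nonneg_left (greedyPotential_succ_le k i ω)
          (bernoulliWeight_nonneg h0 h1 ω)
    _ = ∑ ω, bernoulliWeight p ω * (greedyPotential k i ω *
          ∑ σ, bernoulliWeight p σ * acceptFactor ((edgesToLower i).piecewise σ ω)) :=
        sum_bernoulliWeight_mul_resample p _ (greedyPotential_piecewise_edgesToLower k i)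
    _ ≤ ∑ ω, bernoulliWeight p ω * (greedyPotential k i ω * (1 - (1 - exp (-1)) * (1 - p) ^ k)) :=
        sum_le_sum fun ω _ => mul_le_mul_of_nonneg_left (hstopped ω)
          (bernoulliWeight_nonneg h0 h1 ω)
    _ = _ := by rw [mul_sum]; exact sum_congr rfl fun ω _ => by ring

lemma sum_bernoulliWeight_mul_greedyPotential_le (h0 : 0 ≤ p) (h1 : p ≤ 1) (k : ℕ) {m : ℕ}
    (hm : m ≤ n) :
    ∑ ω : EdgeIdx n → Bool, bernoulliWeight p ω * greedyPotential k m ω ≤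
      (1 - (1 - exp (-1)) * (1 - p) ^ k) ^ m := by
  induction m with
  | zero =>
    calc ∑ ω : EdgeIdx n → Bool, bernoulliWeight p ω * greedyPotential k 0 ω
        ≤ ∑ ω : EdgeIdx n → Bool, bernoulliWeight p ω :=
          sum_le_sum fun ω _ => mul_le_of_le_one_right (bernoulliWeight_nonneg h0 h1 ω)
            (greedyPotential_le_one k 0 ω)
      _ = _ := by rw [sum_bernoulliWeight, pow_zero]
  | succ m ih =>
    rw [pow_succ']
    exact (sum_bernoulliWeight_mul_greedyPotential_succ_le h0 h1 k hm).trans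
      (mul_le_mul_of_nonneg_left (ih (Nat.le_of_succ_le hm))
        (one_sub_mul_one_sub_pow_nonneg h0 h1 k))

end Potential

lemma gnp_real_sampleIndepNum_lt_le {n : ℕ} {p : ℝ} (h0 : 0 ≤ p) (h1 : p ≤ 1) (k : ℕ) :
    (gnp n p).real {ω | sampleIndepNum n ω < k} ≤ exp (k - (1 - exp (-1)) * n * (1 - p) ^ k) := by
  classical
  have hmarkov : ∀ ω ∈ univ.filter (· ∈ {ω | sampleIndepNum n ω < k}),
      bernoulliWeight p ω ≤ bernoulliWeight p ω * (exp k * greedyPotential k n ω) := by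
    intro ω hω
    have hk : #(greedyIndepSet (sampleGraph ω) n) < k :=
      (card_le_sampleIndepNum ω isIndepSet_greedyIndepSet).trans_lt (mem_filter.1 hω).2
    refine le_mul_of_one_le_right (bernoulliWeight_nonneg h0 h1 ω) ?_
    rw [greedyPotential, if_pos hk, ← exp_add]
    exact one_le_exp (by linarith [(Nat.cast_lt (α := ℝ)).2 hk])
  rw [gnp, measureReal_pi_bern h0 h1]
  calc _ ≤ _ := sum_le_sum hmarkov
    _ ≤ ∑ ω, bernoulliWeight p ω * (exp k * greedyPotential k n ω) :=
        sum_le_sum_of_subset_of_nonneg (filter_subset _ _) fun ω _ _ =>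
          mul_nonneg (bernoulliWeight_nonneg h0 h1 ω)
            (mul_nonneg (exp_pos _).le (greedyPotential_nonneg k n ω))
    _ = exp k * ∑ ω, bernoulliWeight p ω * greedyPotential k n ω := by
        rw [mul_sum]; exact sum_congr rfl fun ω _ => by ring
    _ ≤ exp k * (1 - (1 - exp (-1)) * (1 - p) ^ k) ^ n := by
        gcongr; exact sum_bernoulliWeight_mul_greedyPotential_le h0 h1 k le_rfl
    _ ≤ exp k * exp (-((1 - exp (-1)) * (1 - p) ^ k)) ^ n := by
        gcongr
        · exact one_sub_mul_one_sub_pow_nonneg h0 h1 k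
        · exact one_sub_le_exp_neg _
    _ = _ := by rw [← exp_nat_mul, ← exp_add]; ring_nf

lemma exp_neg_two_mul_le_one_sub {x : ℝ} (h0 : 0 ≤ x) (h1 : x ≤ 1 / 2) :
    exp (-(2 * x)) ≤ 1 - x := by
  have hpos : 0 < 1 + 2 * x := by linarith
  calc exp (-(2 * x)) = (exp (2 * x))⁻¹ := exp_neg _
    _ ≤ (1 + 2 * x)⁻¹ := inv_anti₀ hpos (by linarith [add_one_le_exp (2 * x)])
    _ ≤ 1 - x := by rw [inv_le_iff_one_le_mul₀ hpos]; nlinarith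

lemma ceil_sub_mul_one_sub_pow_le {γ C c x : ℝ} (hγ : 0 ≤ γ) (hC : 0 ≤ C) (hγC : 3 * γ * C ≤ 1)
    (hc : 0 ≤ c) (hx : 0 < x) (hL : 1 ≤ log x) (hp : 3 * γ * log x / (4 * x) ≤ 1 / 2) :
    (⌈C * x * log (log x) / log x⌉₊ : ℝ) -
        c * x * (1 - 3 * γ * log x / (4 * x)) ^ ⌈C * x * log (log x) / log x⌉₊ ≤
      1 - x / √(log x) * (c * exp (-1) - C * (log (log x) / √(log x))) := by
  set L := log x
  set K := ⌈C * x * log L / L⌉₊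
  set p := 3 * γ * L / (4 * x)
  have hLL : 0 ≤ log L := log_nonneg hL
  have hsqrt : 0 < √L := sqrt_pos.2 (by linarith)
  have hK : (K : ℝ) ≤ C * x * log L / L + 1 := (Nat.ceil_lt_add_one (by positivity)).le
  have hpK : p * K ≤ log L / 4 + 1 / 2 := by
    calc p * K ≤ p * (C * x * log L / L + 1) := by gcongr
      _ = 3 * γ * C / 4 * log L + p := by simp only [p]; field_simp
      _ ≤ log L / 4 + 1 / 2 := by nlinarith
  have hpow : exp (-1) / √L ≤ (1 - p) ^ K := by
    have hsqrt_eq : √L = exp (log L / 2) := by rw [exp_half, exp_log (by linarith)]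
    calc exp (-1) / √L = exp (-(log L / 2 + 1)) := by
          rw [hsqrt_eq, ← exp_sub]; ring_nf
      _ ≤ exp (-(2 * p)) ^ K := by
          rw [← exp_nat_mul]; exact exp_le_exp.2 (by nlinarith)
      _ ≤ (1 - p) ^ K := by gcongr; exact exp_neg_two_mul_le_one_sub (by positivity) hp
  have hsplit : C * x * log L / L = x / √L * (C * (log L / √L)) := by
    field_simp
    rw [sq_sqrt (by linarith)]
  have hcx : c * x * (exp (-1) / √L) ≤ c * x * (1 - p) ^ K := by gcongr
  calc (K : ℝ) - c * x * (1 - p) ^ K ≤ C * x * log L / L + 1 - c * x * (exp (-1) / √L) := by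
        linarith
    _ = _ := by rw [hsplit]; field_simp; ring

lemma tendsto_mul_log_div_mul_natCast_nhds_zero (a : ℝ) {b : ℝ} (hb : b ≠ 0) :
    Tendsto (fun n : ℕ => a * log n / (b * n)) atTop (𝓝 0) := by
  have := ((tendsto_pow_log_div_mul_add_atTop b 0 1 hb).const_mul a).comp
    tendsto_natCast_atTop_atTop
  simpa [Function.comp_def, mul_div_assoc] using this

lemma tendsto_ceil_sub_mul_one_sub_pow_atBot {γ C c : ℝ} (hγ : 0 ≤ γ) (hC : 0 ≤ C)
    (hγC : 3 * γ * C ≤ 1) (hc : 0 < c) :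
    Tendsto (fun n : ℕ => (⌈C * n * log (log n) / log n⌉₊ : ℝ) -
        c * n * (1 - 3 * γ * log n / (4 * n)) ^ ⌈C * n * log (log n) / log n⌉₊) atTop atBot := by
  have hlog : Tendsto (fun n : ℕ => log n) atTop atTop :=
    tendsto_log_atTop.comp tendsto_natCast_atTop_atTop
  have hp := tendsto_mul_log_div_mul_natCast_nhds_zero (3 * γ) four_ne_zero
  have hratio : Tendsto (fun n : ℕ => log (log n) / √(log n)) atTop (𝓝 0) := by
    have := (isLittleO_log_rpow_atTop one_half_pos).tendsto_div_nhds_zero.comp hlog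
    simpa [Function.comp_def, sqrt_eq_rpow] using this
  have hgrowth : Tendsto (fun n : ℕ => (n : ℝ) / √(log n)) atTop atTop := by
    refine tendsto_atTop_mono' atTop ?_ (tendsto_sqrt_atTop.comp tendsto_natCast_atTop_atTop)
    filter_upwards [hlog.eventually_gt_atTop 0] with n hL
    have hn : (0 : ℝ) < n := by by_contra h; simp_all
    calc √(n : ℝ) = n / √n := (div_sqrt).symm
      _ ≤ n / √(log n) := by gcongr; exact log_le_self hn.le
  have hbound := hgrowth.atTop_mul_pos (C := c * exp (-1)) (by positivity)
    (by simpa using (hratio.const_mul C).const_sub (c * exp (-1)))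
  refine tendsto_atBot_mono' atTop ?_
    (by simpa [sub_eq_add_neg] using
      tendsto_atBot_add_const_left _ 1 (tendsto_neg_atTop_atBot.comp hbound))
  filter_upwards [hlog.eventually_ge_atTop 1, hp.eventually (ge_mem_nhds one_half_pos),
    eventually_gt_atTop 0] with n hL hpn hn
  exact ceil_sub_mul_one_sub_pow_le hγ hC hγC hc.le (Nat.cast_pos.2 hn) hL hpn

lemma tendsto_gnp_real_sampleIndepNum_lt_ceil {γ C : ℝ} (hγ : 0 ≤ γ) (hC : 0 ≤ C)
    (hγC : 3 * γ * C ≤ 1) :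
    Tendsto (fun n : ℕ => (gnp n (3 * γ * log n / (4 * n))).real
      {ω | sampleIndepNum n ω < ⌈C * n * log (log n) / log n⌉₊}) atTop (𝓝 0) := by
  have htail := tendsto_exp_atBot.comp <| tendsto_ceil_sub_mul_one_sub_pow_atBot hγ hC hγC
    (sub_pos.2 (exp_lt_one_iff.2 neg_one_lt_zero))
  refine squeeze_zero' (Eventually.of_forall fun n => measureReal_nonneg) ?_ htail
  filter_upwards [(tendsto_mul_log_div_mul_natCast_nhds_zero (3 * γ) four_ne_zero).eventually
    (ge_mem_nhds one_pos), eventually_ge_atTop 1] with n hp1 hn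
  have hp0 : 0 ≤ 3 * γ * log n / (4 * n) := by
    have := log_nonneg (Nat.one_le_cast.2 hn : (1 : ℝ) ≤ n)
    positivity
  exact gnp_real_sampleIndepNum_lt_le hp0 hp1 _

/-- There exists a constant `C > 0` such that with high probability the
independence number of `G(n, (3γ·ln n)/(4n))` is at least `C·n·ln(ln n)/ln n`. -/
theorem indep_num_sparse_whp (γ : ℝ) (hγ : 0 < γ) :
    ∃ C : ℝ, 0 < C ∧
      Tendsto (fun n : ℕ =>
          ((gnp n (3 * γ * Real.log n / (4 * n)))
            {ω | C * n * Real.log (Real.log n) / Real.log n ≤ (sampleIndepNum n ω : ℝ)}).toReal)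
        atTop (nhds 1) := by
  refine ⟨1 / (3 * γ), by positivity, ?_⟩
  have hsmall := tendsto_gnp_real_sampleIndepNum_lt_ceil hγ.le (by positivity)
    (mul_one_div_cancel (by positivity)).le
  refine tendsto_of_tendsto_of_tendsto_of_le_of_le
    (by simpa only [sub_zero] using hsmall.const_sub 1) tendsto_const_nhds (fun n => ?_)
    fun n => measureReal_le_one
  exact (probReal_compl_eq_one_sub .of_discrete).symm.trans_le
    (measureReal_mono fun ω hω => Nat.ceil_le.1 (not_lt.1 hω))
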